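/- arXiv:math/0412112 — 4 statements merged into one kernel-verified Lean document; each statement's English description precedes it below -/
import Mathlib

section
/- Let Ω = (a,b) be a bounded open interval, D ⊆ Ω measurable with |Ω \ D| > 0, let ū ∈ L²(Ω), μ, λ > 0, and let 𝓛 : ℝ → ℝ be continuous. Then the functional F(u) = μ ∫_{Ω\D} |u(x) − ū(x)|² dx + λ ∫_D |𝓛(u(x)) − ū(x)|² dx + ∫_Ω |u'(x)|² dx attains its infimum over W^{1,2}(Ω): there exists u* ∈ W^{1,2}(Ω) with F(u*) ≤ F(u) for all u ∈ W^{1,2}(Ω). -/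
/- STATEMENT 6 (existence for Problem 2, p = 2): On Ω = (a,b), with D ⊆ Ω measurable,
|Ω \ D| > 0, ū ∈ L²(Ω), μ, λ > 0, 𝓛 continuous, the functional
F(u) = μ ∫_{Ω\D} |u-ū|² + λ ∫_D |𝓛(u)-ū|² + ∫_Ω |u'|²
attains its infimum over W^{1,2}(Ω). Here W^{1,2}(Ω) is encoded as the set of pairs
(u, u') with u absolutely continuous on (a,b) with a.e. derivative u' (via the FTC
characterization), u ∈ L²(Ω), u' ∈ L²(Ω). -/

open MeasureTheory Set

/-- `u` is in W^{1,2}((a,b)) with derivative `u'`. -/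
def W12 (a b : ℝ) (u u' : ℝ → ℝ) : Prop :=
  (∀ x ∈ Ioo a b, ∀ y ∈ Ioo a b, u y - u x = ∫ t in x..y, u' t) ∧
  MemLp u 2 (volume.restrict (Ioo a b)) ∧
  MemLp u' 2 (volume.restrict (Ioo a b))

/-- The inpainting energy functional of Problem 2 of the paper (p = 2). -/
noncomputable def inpaintF (a b mu lam : ℝ) (D : Set ℝ) (ub L : ℝ → ℝ)
    (u u' : ℝ → ℝ) : ℝ :=
  mu * (∫ x in Ioo a b \ D, (u x - ub x) ^ 2) +
    lam * (∫ x in D, (L (u x) - ub x) ^ 2) +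
    ∫ x in Ioo a b, (u' x) ^ 2

/-
Direct method. Along a minimizing sequence the energy bounds `∫_Ω u'²` and `∫_{Ω \ D} (u - ū)²`,
hence `∫_{Ω \ D} u²`. As `|Ω \ D| > 0`, `u²` is at most its mean over `Ω \ D` at some point, and
the Cauchy–Schwarz bound `|u y - u x| ≤ √(b - a) ‖u'‖₂` then makes the sequence uniformly
bounded. Weak sequential compactness of balls in `L²(Ω)` (Banach–Alaoglu) and compactness of
`[-M, M]` give a subsequence whose derivatives converge weakly to some `g` and whose values at
the midpoint converge to some `c`; testing against indicators of intervals shows that it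
converges pointwise on `Ω` to `u = c + ∫ g`. Dominated convergence passes both fidelity terms to
the limit (`L` is bounded on `[-M, M]`), and the Dirichlet term is weakly lower semicontinuous.
-/

open Filter Topology
open scoped RealInnerProductSpace ENNReal Interval

theorem exists_subseq_tendsto_inner {H : Type*} [NormedAddCommGroup H] [InnerProductSpace ℝ H]
    [CompleteSpace H] [TopologicalSpace.SeparableSpace H] {g : ℕ → H} {R : ℝ}
    (hg : ∀ n, ‖g n‖ ≤ R) :
    ∃ g₀ : H, ∃ φ : ℕ → ℕ, StrictMono φ ∧
      ∀ y : H, Tendsto (fun n => ⟪g (φ n), y⟫) atTop (𝓝 ⟪g₀, y⟫) := by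
  have hball : ∀ n, StrongDual.toWeakDual (InnerProductSpace.toDual ℝ H (g n)) ∈
      WeakDual.toStrongDual ⁻¹' Metric.closedBall 0 R := by
    simpa using hg
  obtain ⟨T, -, φ, hφ, hT⟩ := WeakDual.isSeqCompact_closedBall ℝ H 0 R hball
  refine ⟨(InnerProductSpace.toDual ℝ H).symm (WeakDual.toStrongDual T), φ, hφ, fun y => ?_⟩
  rw [InnerProductSpace.toDual_symm_apply]
  exact ((WeakDual.eval_continuous y).tendsto T).comp hT

theorem norm_sq_le_of_tendsto_inner {H : Type*} [NormedAddCommGroup H] [InnerProductSpace ℝ H]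
    {G : ℕ → H} {g : H} (hG : ∀ y, Tendsto (fun n => ⟪G n, y⟫) atTop (𝓝 ⟪g, y⟫))
    {l : ℝ} (hl : Tendsto (fun n => ‖G n‖ ^ 2) atTop (𝓝 l)) : ‖g‖ ^ 2 ≤ l := by
  have hlim : Tendsto (fun n => 2 * ⟪G n, g⟫ - ‖g‖ ^ 2) atTop (𝓝 (‖g‖ ^ 2)) := by
    convert ((hG g).const_mul 2).sub_const (‖g‖ ^ 2) using 2
    rw [real_inner_self_eq_norm_sq]; ring
  refine le_of_tendsto_of_tendsto' hlim hl fun n => ?_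
  nlinarith [real_inner_le_norm (G n) g, sq_nonneg (‖G n‖ - ‖g‖)]

section L2

variable {α : Type*} [MeasurableSpace α] {μ : Measure α}

theorem MeasureTheory.Lp.norm_sq_eq_integral_sq (f : Lp ℝ 2 μ) :
    ‖f‖ ^ 2 = ∫ x, f x ^ 2 ∂μ := by
  rw [← real_inner_self_eq_norm_sq, L2.inner_def]
  simp [sq]

theorem MeasureTheory.MemLp.norm_toLp_sq {f : α → ℝ} (hf : MemLp f 2 μ) :
    ‖hf.toLp f‖ ^ 2 = ∫ x, f x ^ 2 ∂μ := by
  rw [Lp.norm_sq_eq_integral_sq]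
  exact integral_congr_ae (hf.coeFn_toLp.mono fun x hx => by simp only [hx])

theorem abs_setIntegral_le_sqrt_mul_sqrt {f : α → ℝ} (hf : MemLp f 2 μ) {t : Set α}
    (ht : MeasurableSet t) (hμt : μ t ≠ ∞) :
    |∫ x in t, f x ∂μ| ≤ √(μ.real t) * √(∫ x, f x ^ 2 ∂μ) := by
  have h := abs_real_inner_le_norm (indicatorConstLp 2 ht hμt (1 : ℝ)) (hf.toLp f)
  rwa [L2.inner_indicatorConstLp_one, norm_indicatorConstLp two_ne_zero ENNReal.ofNat_ne_top,
    ← Real.sqrt_sq (norm_nonneg (hf.toLp f)), hf.norm_toLp_sq,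
    integral_congr_ae (ae_restrict_of_ae hf.coeFn_toLp), norm_one, one_mul, ENNReal.toReal_ofNat,
    ← Real.sqrt_eq_rpow] at h

theorem tendsto_setIntegral_of_tendsto_inner {G : ℕ → Lp ℝ 2 μ} {g : Lp ℝ 2 μ}
    (hG : ∀ y, Tendsto (fun n => ⟪G n, y⟫) atTop (𝓝 ⟪g, y⟫)) {t : Set α}
    (ht : MeasurableSet t) (hμt : μ t ≠ ∞) :
    Tendsto (fun n => ∫ x in t, G n x ∂μ) atTop (𝓝 (∫ x in t, g x ∂μ)) := by
  simp_rw [← L2.inner_indicatorConstLp_one ht hμt, real_inner_comm _ (indicatorConstLp _ _ _ _)]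
  exact hG _

theorem tendsto_setIntegral_sq_sub_comp {t : Set α} (ht : MeasurableSet t) (hμt : μ t ≠ ∞)
    {f : ℝ → ℝ} (hf : Continuous f) {U : ℕ → α → ℝ} {u w : α → ℝ} {M : ℝ}
    (hU : ∀ n, AEStronglyMeasurable (U n) (μ.restrict t)) (hw : MemLp w 2 (μ.restrict t))
    (hM : ∀ n, ∀ x ∈ t, |U n x| ≤ M)
    (hlim : ∀ x ∈ t, Tendsto (fun n => U n x) atTop (𝓝 (u x))) :
    Tendsto (fun n => ∫ x in t, (f (U n x) - w x) ^ 2 ∂μ) atTop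
      (𝓝 (∫ x in t, (f (u x) - w x) ^ 2 ∂μ)) := by
  have : IsFiniteMeasure (μ.restrict t) := isFiniteMeasure_restrict.2 hμt
  obtain ⟨K, hK⟩ :=
    (isCompact_Icc (a := -M) (b := M)).exists_bound_of_continuousOn hf.continuousOn
  refine tendsto_integral_of_dominated_convergence (fun x => (K + |w x|) ^ 2)
    (fun n => ?_) ((memLp_const K).add hw.abs).integrable_sq
    (fun n => ae_restrict_of_forall_mem ht fun x hx => ?_)
    (ae_restrict_of_forall_mem ht fun x hx =>
      (((hf.tendsto _).comp (hlim x hx)).sub_const _).pow 2)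
  · exact ((hf.comp_aestronglyMeasurable (hU n)).sub hw.1).pow 2
  · have hfU : |f (U n x)| ≤ K := by simpa using hK _ (abs_le.1 (hM n x hx))
    rw [Real.norm_eq_abs, abs_sq, ← sq_abs]
    exact pow_le_pow_left₀ (abs_nonneg _) ((abs_sub _ _).trans (by gcongr)) 2

end L2

section Interval

variable {a b : ℝ}

theorem uIoc_subset_Ioo {x y : ℝ} (hx : x ∈ Ioo a b) (hy : y ∈ Ioo a b) :
    Ι x y ⊆ Ioo a b :=
  uIoc_subset_uIcc.trans (ordConnected_Ioo.uIcc_subset hx hy)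

theorem W12.abs_sub_le {u u' : ℝ → ℝ} (hu : W12 a b u u') {x y : ℝ} (hx : x ∈ Ioo a b)
    (hy : y ∈ Ioo a b) : |u y - u x| ≤ √(b - a) * √(∫ t in Ioo a b, u' t ^ 2) := by
  have hsub := uIoc_subset_Ioo hx hy
  rw [hu.1 x hx y hy, intervalIntegral.abs_integral_eq_abs_integral_uIoc,
    ← Measure.restrict_restrict_of_subset hsub]
  refine (abs_setIntegral_le_sqrt_mul_sqrt hu.2.2 measurableSet_uIoc (measure_ne_top _ _)).trans ?_
  gcongr
  calc (volume.restrict (Ioo a b)).real (Ι x y) ≤ volume.real (Ioo a b) := by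
        rw [measureReal_restrict_apply measurableSet_uIoc, inter_eq_left.2 hsub]
        exact measureReal_mono hsub measure_Ioo_lt_top.ne
    _ = b - a := by simp [Real.volume_real_Ioo_of_le (hx.1.trans hx.2).le]

theorem W12.abs_le_of_integral_sq_le {u u' w : ℝ → ℝ} (hu : W12 a b u u')
    (hw : MemLp w 2 (volume.restrict (Ioo a b))) {S : Set ℝ} (hSsub : S ⊆ Ioo a b)
    (hSpos : 0 < volume S) {A B : ℝ}
    (hA : ∫ x in S, (u x - w x) ^ 2 ≤ A) (hB : ∫ x in Ioo a b, u' x ^ 2 ≤ B)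
    {x : ℝ} (hx : x ∈ Ioo a b) :
    |u x| ≤ √((2 * A + 2 * ∫ x in S, w x ^ 2) / volume.real S) + √(b - a) * √B := by
  have hrestrict : volume.restrict S ≤ volume.restrict (Ioo a b) :=
    Measure.restrict_mono hSsub le_rfl
  have hSfin : volume S ≠ ∞ := (measure_mono hSsub).trans_lt measure_Ioo_lt_top |>.ne
  have hint : ∀ {f : ℝ → ℝ}, MemLp f 2 (volume.restrict (Ioo a b)) →
      IntegrableOn (fun x => f x ^ 2) S := fun hf => hf.integrable_sq.mono_measure hrestrict
  have hdiff : IntegrableOn (fun x => (u x - w x) ^ 2) S := hint (hu.2.1.sub hw)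
  have hsq : ∫ x in S, u x ^ 2 ≤ 2 * A + 2 * ∫ x in S, w x ^ 2 := calc
    ∫ x in S, u x ^ 2 ≤ ∫ x in S, (2 * (u x - w x) ^ 2 + 2 * w x ^ 2) :=
      integral_mono (hint hu.2.1) ((hdiff.const_mul 2).add ((hint hw).const_mul 2))
        fun x => by nlinarith [sq_nonneg (u x - 2 * w x)]
    _ = 2 * (∫ x in S, (u x - w x) ^ 2) + 2 * ∫ x in S, w x ^ 2 := by
      rw [integral_add (hdiff.const_mul 2) ((hint hw).const_mul 2),
        integral_const_mul, integral_const_mul]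
    _ ≤ 2 * A + 2 * ∫ x in S, w x ^ 2 := by linarith
  obtain ⟨y, hyS, hy⟩ := exists_le_setAverage hSpos.ne' hSfin (hint hu.2.1)
  rw [setAverage_eq, smul_eq_mul, inv_mul_eq_div] at hy
  have hyu : |u y| ≤ √((2 * A + 2 * ∫ x in S, w x ^ 2) / volume.real S) :=
    Real.abs_le_sqrt (hy.trans (by gcongr))
  have hosc := hu.abs_sub_le (hSsub hyS) hx
  calc |u x| ≤ |u y| + |u x - u y| := by
        simpa using abs_add_le (u y) (u x - u y)
    _ ≤ _ := add_le_add hyu (hosc.trans (by gcongr))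

theorem tendsto_intervalIntegral_of_tendsto_inner {G : ℕ → Lp ℝ 2 (volume.restrict (Ioo a b))}
    {g : Lp ℝ 2 (volume.restrict (Ioo a b))}
    (hG : ∀ y, Tendsto (fun n => ⟪G n, y⟫) atTop (𝓝 ⟪g, y⟫)) {f : ℕ → ℝ → ℝ}
    (hf : ∀ n, G n =ᵐ[volume.restrict (Ioo a b)] f n) {x y : ℝ} (hx : x ∈ Ioo a b)
    (hy : y ∈ Ioo a b) :
    Tendsto (fun n => ∫ t in x..y, f n t) atTop (𝓝 (∫ t in x..y, g t)) := by
  have hIoc : ∀ {s : Set ℝ}, s ⊆ Ioo a b → MeasurableSet s →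
      Tendsto (fun n => ∫ t in s, f n t) atTop (𝓝 (∫ t in s, g t)) := by
    intro s hs hsm
    have h := tendsto_setIntegral_of_tendsto_inner hG hsm (measure_ne_top _ _)
    rw [Measure.restrict_restrict_of_subset hs] at h
    exact h.congr fun n => integral_congr_ae (ae_restrict_of_ae_restrict_of_subset hs (hf n))
  exact (hIoc ((Ioc_subset_uIoc).trans (uIoc_subset_Ioo hx hy)) measurableSet_Ioc).sub
    (hIoc ((Ioc_subset_uIoc').trans (uIoc_subset_Ioo hx hy)) measurableSet_Ioc)

theorem exists_subseq_tendsto_W12 (hab : a < b) {U U' : ℕ → ℝ → ℝ}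
    (hU : ∀ n, W12 a b (U n) (U' n)) {C M : ℝ} (hC : ∀ n, ∫ x in Ioo a b, U' n x ^ 2 ≤ C)
    (hM : ∀ n, ∀ x ∈ Ioo a b, |U n x| ≤ M) :
    ∃ σ : ℕ → ℕ, StrictMono σ ∧ ∃ u u' : ℝ → ℝ, W12 a b u u' ∧
      (∀ x ∈ Ioo a b, Tendsto (fun n => U (σ n) x) atTop (𝓝 (u x))) ∧
      ∀ l, Tendsto (fun n => ∫ x in Ioo a b, U' (σ n) x ^ 2) atTop (𝓝 l) →
        ∫ x in Ioo a b, u' x ^ 2 ≤ l := by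
  have : Fact ((2 : ℝ≥0∞) ≠ ∞) := ⟨ENNReal.ofNat_ne_top⟩
  set G : ℕ → Lp ℝ 2 (volume.restrict (Ioo a b)) := fun n => (hU n).2.2.toLp (U' n)
  have hG : ∀ n, ‖G n‖ ^ 2 = ∫ x in Ioo a b, U' n x ^ 2 := fun n => (hU n).2.2.norm_toLp_sq
  obtain ⟨g, φ, hφ, hg⟩ := exists_subseq_tendsto_inner (g := G) (R := √C) fun n =>
    Real.le_sqrt_of_sq_le ((hG n).trans_le (hC n))
  have hx₀ : (a + b) / 2 ∈ Ioo a b := ⟨by linarith, by linarith⟩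
  obtain ⟨c, -, ψ, hψ, hc⟩ := tendsto_subseq_of_bounded (Metric.isBounded_Icc (-M) M)
    fun n => abs_le.1 (hM (φ n) _ hx₀)
  have hgψ : ∀ y, Tendsto (fun n => ⟪G (φ (ψ n)), y⟫) atTop (𝓝 ⟪g, y⟫) :=
    fun y => (hg y).comp hψ.tendsto_atTop
  set u : ℝ → ℝ := fun x => c + ∫ t in (a + b) / 2..x, g t
  have hlim : ∀ x ∈ Ioo a b, Tendsto (fun n => U (φ (ψ n)) x) atTop (𝓝 (u x)) := by
    intro x hx
    have hU_eq : ∀ n, U (φ (ψ n)) x =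
        U (φ (ψ n)) ((a + b) / 2) + ∫ t in (a + b) / 2..x, U' (φ (ψ n)) t := fun n => by
      rw [← (hU (φ (ψ n))).1 _ hx₀ x hx]; ring
    simp_rw [hU_eq]
    exact hc.add (tendsto_intervalIntegral_of_tendsto_inner hgψ
      (fun n => (hU _).2.2.coeFn_toLp) hx₀ hx)
  have hg_int : ∀ x ∈ Ioo a b, ∀ y ∈ Ioo a b, IntervalIntegrable g volume x y :=
    fun x hx y hy => IntegrableOn.intervalIntegrable <| IntegrableOn.mono_set
      ((Lp.memLp g).integrable one_le_two) (ordConnected_Ioo.uIcc_subset hx hy)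
  refine ⟨φ ∘ ψ, hφ.comp hψ, u, g, ⟨fun x hx y hy => ?_, ?_, Lp.memLp g⟩, hlim,
    fun l hl => ?_⟩
  · rw [add_sub_add_left_eq_sub]
    exact intervalIntegral.integral_interval_sub_left (hg_int _ hx₀ _ hy) (hg_int _ hx₀ _ hx)
  · refine MemLp.of_bound (aestronglyMeasurable_of_tendsto_ae atTop (fun n => (hU _).2.1.1)
      (ae_restrict_of_forall_mem measurableSet_Ioo hlim)) M
      (ae_restrict_of_forall_mem measurableSet_Ioo fun x hx => ?_)
    exact le_of_tendsto' (hlim x hx).abs fun n => hM _ x hx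
  · rw [← Lp.norm_sq_eq_integral_sq]
    exact norm_sq_le_of_tendsto_inner hgψ (by simpa only [hG, Function.comp_apply] using hl)

theorem inpaintF_le_of_tendsto {mu lam m M : ℝ} {D : Set ℝ} (hD : MeasurableSet D)
    (hDsub : D ⊆ Ioo a b) {ub L : ℝ → ℝ} (hub : MemLp ub 2 (volume.restrict (Ioo a b)))
    (hL : Continuous L) {U U' : ℕ → ℝ → ℝ} {u u' : ℝ → ℝ}
    (hU : ∀ n, AEStronglyMeasurable (U n) (volume.restrict (Ioo a b)))
    (hM : ∀ n, ∀ x ∈ Ioo a b, |U n x| ≤ M)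
    (hlim : ∀ x ∈ Ioo a b, Tendsto (fun n => U n x) atTop (𝓝 (u x)))
    (hlsc : ∀ l, Tendsto (fun n => ∫ x in Ioo a b, U' n x ^ 2) atTop (𝓝 l) →
      ∫ x in Ioo a b, u' x ^ 2 ≤ l)
    (hF : Tendsto (fun n => inpaintF a b mu lam D ub L (U n) (U' n)) atTop (𝓝 m)) :
    inpaintF a b mu lam D ub L u u' ≤ m := by
  have hfid : ∀ {t : Set ℝ}, t ⊆ Ioo a b → MeasurableSet t →
      ∀ {f : ℝ → ℝ}, Continuous f →
      Tendsto (fun n => ∫ x in t, (f (U n x) - ub x) ^ 2) atTop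
        (𝓝 (∫ x in t, (f (u x) - ub x) ^ 2)) := fun ht htm _ hf =>
    tendsto_setIntegral_sq_sub_comp htm ((measure_mono ht).trans_lt measure_Ioo_lt_top).ne hf
      (fun n => (hU n).mono_measure (Measure.restrict_mono ht le_rfl))
      (hub.mono_measure (Measure.restrict_mono ht le_rfl)) (fun n x hx => hM n x (ht hx))
      (fun x hx => hlim x (ht hx))
  have hS : Tendsto (fun n => ∫ x in Ioo a b \ D, (U n x - ub x) ^ 2) atTop
      (𝓝 (∫ x in Ioo a b \ D, (u x - ub x) ^ 2)) :=
    hfid sdiff_subset (measurableSet_Ioo.diff hD) continuous_id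
  have hdir := hlsc _ (((hF.sub (hS.const_mul mu)).sub
    ((hfid hDsub hD hL).const_mul lam)).congr fun n => by simp only [inpaintF]; ring)
  simp only [inpaintF]
  linarith

theorem le_inpaintF {mu lam : ℝ} (hmu : 0 ≤ mu) (hlam : 0 ≤ lam) (D : Set ℝ)
    (ub L u u' : ℝ → ℝ) :
    mu * (∫ x in Ioo a b \ D, (u x - ub x) ^ 2) ≤ inpaintF a b mu lam D ub L u u' ∧
      ∫ x in Ioo a b, u' x ^ 2 ≤ inpaintF a b mu lam D ub L u u' := by
  have h₁ : 0 ≤ mu * ∫ x in Ioo a b \ D, (u x - ub x) ^ 2 :=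
    mul_nonneg hmu (integral_nonneg fun x => sq_nonneg _)
  have h₂ : 0 ≤ lam * ∫ x in D, (L (u x) - ub x) ^ 2 :=
    mul_nonneg hlam (integral_nonneg fun x => sq_nonneg _)
  have h₃ : 0 ≤ ∫ x in Ioo a b, u' x ^ 2 := integral_nonneg fun x => sq_nonneg _
  constructor <;> (simp only [inpaintF]; linarith)

end Interval

theorem exists_minimizer (a b mu lam : ℝ) (hab : a < b) (hmu : 0 < mu) (hlam : 0 < lam)
    (D : Set ℝ) (hD : MeasurableSet D) (hDsub : D ⊆ Ioo a b)
    (hpos : 0 < volume (Ioo a b \ D))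
    (ub : ℝ → ℝ) (hub : MemLp ub 2 (volume.restrict (Ioo a b)))
    (L : ℝ → ℝ) (hL : Continuous L) :
    ∃ u u' : ℝ → ℝ, W12 a b u u' ∧
      ∀ v v' : ℝ → ℝ, W12 a b v v' →
        inpaintF a b mu lam D ub L u u' ≤ inpaintF a b mu lam D ub L v v' := by
  set F := inpaintF a b mu lam D ub L
  have hF : ∀ u u', mu * (∫ x in Ioo a b \ D, (u x - ub x) ^ 2) ≤ F u u' ∧
      ∫ x in Ioo a b, u' x ^ 2 ≤ F u u' := le_inpaintF hmu.le hlam.le D ub L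
  set V := {r | ∃ u u', W12 a b u u' ∧ F u u' = r}
  have hV : V.Nonempty := ⟨_, 0, 0, ⟨by simp, memLp_const 0, memLp_const 0⟩, rfl⟩
  have hVbdd : BddBelow V := ⟨0, by
    rintro _ ⟨u, u', -, rfl⟩
    exact (integral_nonneg fun x => sq_nonneg _).trans (hF u u').2⟩
  obtain ⟨r, hr_anti, hr, hrV⟩ := exists_seq_tendsto_sInf hV hVbdd
  choose U U' hU hUr using hrV
  have hUF : ∀ n, F (U n) (U' n) ≤ r 0 := fun n => (hUr n).trans_le (hr_anti n.zero_le)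
  have hM : ∀ n, ∀ x ∈ Ioo a b, |U n x| ≤ _ := fun n x hx =>
    (hU n).abs_le_of_integral_sq_le hub sdiff_subset hpos
      ((le_div_iff₀' hmu).2 ((hF _ _).1.trans (hUF n))) ((hF _ _).2.trans (hUF n)) hx
  obtain ⟨σ, hσ, u, u', hu, hlim, hlsc⟩ :=
    exists_subseq_tendsto_W12 hab hU (fun n => (hF _ _).2.trans (hUF n)) hM
  refine ⟨u, u', hu, fun v v' hv => ?_⟩
  calc F u u' ≤ sInf V := inpaintF_le_of_tendsto hD hDsub hub hL (fun n => (hU _).2.1.1)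
        (fun n => hM _) hlim hlsc ((hr.comp hσ.tendsto_atTop).congr fun n => (hUr _).symm)
    _ ≤ F v v' := csInf_le hVbdd ⟨v, v', hv, rfl⟩
end

section
/- Let Ω = (a,b) be a bounded open interval and S ⊆ Ω a measurable set with |S| > 0. Then there exists a constant C > 0, depending only on Ω and S, such that for every absolutely continuous u : Ω → ℝ with u' ∈ L²(Ω), ∫_Ω |u(x)|² dx ≤ C ( ∫_Ω |u'(x)|² dx + ∫_S |u(x)|² dx ). -/
/-!
For `x, y ∈ (a, b)`, Cauchy–Schwarz applied to `u x - u y = ∫_y^x u'` gives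
`u(x)² ≤ 2 u(y)² + 2 (b - a) ‖u'‖₂²`. Averaging over `y ∈ S` and then integrating over
`x ∈ (a, b)` yields the inequality with `C = 2 (b - a)² + 2 (b - a) / |S|`.
-/

open MeasureTheory Set
open scoped Interval

lemma sq_integral_le_measureReal_univ_mul_integral_sq {α : Type*} [MeasurableSpace α]
    {μ : Measure α} [IsFiniteMeasure μ] {f : α → ℝ} (hf : MemLp f 2 μ) :
    (∫ x, f x ∂μ) ^ 2 ≤ μ.real univ * ∫ x, f x ^ 2 ∂μ := by
  rcases eq_zero_or_neZero μ with rfl | hμ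
  · simp
  have jensen : (⨍ x, f x ∂μ) ^ 2 ≤ ⨍ x, f x ^ 2 ∂μ :=
    even_two.convexOn_pow.map_average_le (continuous_pow 2).continuousOn isClosed_univ
      (by simp) (hf.integrable one_le_two) hf.integrable_sq
  have hm : 0 < μ.real univ := measureReal_univ_pos
  rw [average_eq, average_eq, smul_eq_mul, smul_eq_mul, mul_pow] at jensen
  field_simp at jensen
  exact jensen

lemma sq_intervalIntegral_le_abs_sub_mul_setIntegral_sq {f : ℝ → ℝ} {s : Set ℝ} {x y : ℝ}
    (hs : Ι x y ⊆ s) (hf : MemLp f 2 (volume.restrict s)) :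
    (∫ t in x..y, f t) ^ 2 ≤ |y - x| * ∫ t in s, f t ^ 2 := by
  have : IsFiniteMeasure (volume.restrict (Ι x y)) := by
    rw [isFiniteMeasure_restrict, Real.volume_uIoc]; exact ENNReal.ofReal_ne_top
  calc (∫ t in x..y, f t) ^ 2 = (∫ t in Ι x y, f t) ^ 2 := by
        rw [← sq_abs, ← Real.norm_eq_abs, intervalIntegral.norm_integral_eq_norm_integral_uIoc,
          Real.norm_eq_abs, sq_abs]
    _ ≤ |y - x| * ∫ t in Ι x y, f t ^ 2 := by
        simpa [measureReal_def, Real.volume_uIoc] using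
          sq_integral_le_measureReal_univ_mul_integral_sq
            (hf.mono_measure (Measure.restrict_mono hs le_rfl))
    _ ≤ |y - x| * ∫ t in s, f t ^ 2 := by
        gcongr
        · exact .of_forall fun t => sq_nonneg _
        · exact hf.integrable_sq

section Primitive

variable {a b : ℝ} {u u' : ℝ → ℝ}

lemma continuousOn_of_sub_eq_intervalIntegral
    (hftc : ∀ x ∈ Ioo a b, ∀ y ∈ Ioo a b, u y - u x = ∫ t in x..y, u' t)
    (hu' : IntegrableOn u' (Ioo a b)) : ContinuousOn u (Ioo a b) := by
  intro x hx
  have hsub : Ioo a b ⊆ [[a, b]] := Ioo_subset_Icc_self.trans Icc_subset_uIcc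
  have hprim : ContinuousOn (fun y => u x + ∫ t in x..y, u' t) (Ioo a b) :=
    continuousOn_const.add <| (intervalIntegral.continuousOn_primitive_interval'
      ((intervalIntegrable_iff_integrableOn_Ioo_of_le (hx.1.trans hx.2).le).2 hu')
      (hsub hx)).mono hsub
  exact (hprim x hx).congr (fun y hy => by rw [← hftc x hx y hy]; ring) (by simp)

lemma sq_le_two_mul_sq_add_of_sub_eq_intervalIntegral
    (hftc : ∀ x ∈ Ioo a b, ∀ y ∈ Ioo a b, u y - u x = ∫ t in x..y, u' t)
    (hu' : MemLp u' 2 (volume.restrict (Ioo a b))) {x y : ℝ} (hx : x ∈ Ioo a b)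
    (hy : y ∈ Ioo a b) :
    u x ^ 2 ≤ 2 * u y ^ 2 + 2 * ((b - a) * ∫ t in Ioo a b, u' t ^ 2) := by
  have hI : 0 ≤ ∫ t in Ioo a b, u' t ^ 2 :=
    setIntegral_nonneg measurableSet_Ioo fun t _ => sq_nonneg _
  have hdist : |x - y| ≤ b - a :=
    abs_sub_le_iff.2 ⟨by linarith [hx.2, hy.1], by linarith [hx.1, hy.2]⟩
  have hincr : (u x - u y) ^ 2 ≤ (b - a) * ∫ t in Ioo a b, u' t ^ 2 := by
    rw [hftc y hy x hx]
    exact (sq_intervalIntegral_le_abs_sub_mul_setIntegral_sq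
      (uIoc_subset_uIcc.trans (ordConnected_Ioo.uIcc_subset hy hx)) hu').trans (by gcongr)
  nlinarith [sq_nonneg (u x - 2 * u y)]

lemma integrableOn_sq_of_sub_eq_intervalIntegral
    (hftc : ∀ x ∈ Ioo a b, ∀ y ∈ Ioo a b, u y - u x = ∫ t in x..y, u' t)
    (hu' : MemLp u' 2 (volume.restrict (Ioo a b))) :
    IntegrableOn (fun x => u x ^ 2) (Ioo a b) := by
  rcases (Ioo a b).eq_empty_or_nonempty with hempty | ⟨y, hy⟩
  · simp [hempty]
  -- `u` is not assumed measurable: measurability comes from continuity.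
  have hmeas : AEStronglyMeasurable (fun x => u x ^ 2) (volume.restrict (Ioo a b)) :=
    ((continuousOn_of_sub_eq_intervalIntegral hftc (hu'.integrable one_le_two)).pow 2
      ).aestronglyMeasurable measurableSet_Ioo
  refine IntegrableOn.of_bound measure_Ioo_lt_top hmeas
    (2 * u y ^ 2 + 2 * ((b - a) * ∫ t in Ioo a b, u' t ^ 2)) ?_
  filter_upwards [ae_restrict_mem measurableSet_Ioo] with x hx
  rw [Real.norm_of_nonneg (sq_nonneg _)]
  exact sq_le_two_mul_sq_add_of_sub_eq_intervalIntegral hftc hu' hx hy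

lemma sq_mul_measureReal_le_of_sub_eq_intervalIntegral
    (hftc : ∀ x ∈ Ioo a b, ∀ y ∈ Ioo a b, u y - u x = ∫ t in x..y, u' t)
    (hu' : MemLp u' 2 (volume.restrict (Ioo a b))) {S : Set ℝ} (hS : MeasurableSet S)
    (hSsub : S ⊆ Ioo a b) {x : ℝ} (hx : x ∈ Ioo a b) :
    u x ^ 2 * volume.real S ≤
      2 * (∫ y in S, u y ^ 2) + 2 * ((b - a) * ∫ t in Ioo a b, u' t ^ 2) * volume.real S := by
  have hSfin : volume S ≠ ⊤ := ((measure_mono hSsub).trans_lt measure_Ioo_lt_top).ne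
  have hu2 := (integrableOn_sq_of_sub_eq_intervalIntegral hftc hu').mono_set hSsub
  have := setIntegral_ge_of_const_le_real hS hSfin
    (fun y hy => sq_le_two_mul_sq_add_of_sub_eq_intervalIntegral hftc hu' hx (hSsub hy))
    ((hu2.const_mul 2).add (integrableOn_const hSfin))
  rwa [integral_add (hu2.const_mul 2) (integrableOn_const hSfin), integral_const_mul,
    setIntegral_const, smul_eq_mul, mul_comm (volume.real S)] at this

end Primitive

theorem poincare_type (a b : ℝ) (hab : a < b)
    (S : Set ℝ) (hS : MeasurableSet S) (hSsub : S ⊆ Ioo a b) (hSpos : 0 < volume S) :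
    ∃ C : ℝ, 0 < C ∧
      ∀ u u' : ℝ → ℝ,
        (∀ x ∈ Ioo a b, ∀ y ∈ Ioo a b, u y - u x = ∫ t in x..y, u' t) →
        MemLp u' 2 (volume.restrict (Ioo a b)) →
        (∫ x in Ioo a b, (u x) ^ 2) ≤
          C * ((∫ x in Ioo a b, (u' x) ^ 2) + ∫ x in S, (u x) ^ 2) := by
  have hL : 0 < b - a := sub_pos.2 hab
  have hs : 0 < volume.real S :=
    ENNReal.toReal_pos hSpos.ne' ((measure_mono hSsub).trans_lt measure_Ioo_lt_top).ne
  refine ⟨2 * (b - a) * (b - a) + 2 * (b - a) / volume.real S, by positivity,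
    fun u u' hftc hu' => ?_⟩
  set s := volume.real S
  set I := ∫ x in Ioo a b, u' x ^ 2
  set J := ∫ x in S, u x ^ 2
  have hpointwise : ∀ x ∈ Ioo a b, ‖u x ^ 2‖ ≤ (2 * J + 2 * ((b - a) * I) * s) / s := by
    intro x hx
    rw [Real.norm_of_nonneg (sq_nonneg _), le_div_iff₀ hs]
    exact sq_mul_measureReal_le_of_sub_eq_intervalIntegral hftc hu' hS hSsub hx
  calc ∫ x in Ioo a b, u x ^ 2
      ≤ (2 * J + 2 * ((b - a) * I) * s) / s * volume.real (Ioo a b) :=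
        (le_abs_self _).trans (norm_setIntegral_le_of_norm_le_const measure_Ioo_lt_top hpointwise)
    _ = 2 * (b - a) * (b - a) * I + 2 * (b - a) / s * J := by
        rw [Real.volume_real_Ioo_of_le hab.le]; field_simp; ring
    _ ≤ (2 * (b - a) * (b - a) + 2 * (b - a) / s) * (I + J) := by
        have hI : 0 ≤ I := setIntegral_nonneg measurableSet_Ioo fun _ _ => sq_nonneg _
        have hJ : 0 ≤ J := setIntegral_nonneg hS fun _ _ => sq_nonneg _
        rw [mul_add]
        gcongr
        · exact le_add_of_nonneg_right (by positivity)
        · exact le_add_of_nonneg_left (by positivity)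
end

section
/- Let D ⊆ ℝ be measurable, ū ∈ L²(D), and let 𝓛 ∈ C¹(ℝ) with 𝓛 and 𝓛' bounded. Then the functional G : L²(D) → ℝ defined by G(u) = ∫_D |𝓛(u(x)) − ū(x)|² dx is Gateaux differentiable at every u ∈ L²(D), with derivative in direction v ∈ L²(D) given by G'(u)[v] = 2 ∫_D (𝓛(u(x)) − ū(x)) 𝓛'(u(x)) v(x) dx; that is, lim_{s→0} (G(u + s v) − G(u))/s = 2 ∫_D (𝓛(u) − ū) 𝓛'(u) v dx. -/
/-! Differentiate `s ↦ ∫ (𝓛(u + s v) - ū)²` under the integral sign. The `s`-derivative of the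
integrand is `2 (𝓛(u + s v) - ū) 𝓛'(u + s v) v`, which is dominated uniformly in `s` by
`2 M (M + |ū|) |v|`; this is integrable on a finite measure space as a product of two `L²`
functions. -/

open MeasureTheory Set Filter

lemma hasDerivAt_sq_comp_add_mul_sub {L : ℝ → ℝ} (hL : Differentiable ℝ L) (a b c s : ℝ) :
    HasDerivAt (fun s => (L (a + s * c) - b) ^ 2)
      (2 * ((L (a + s * c) - b) * deriv L (a + s * c) * c)) s := by
  have hline : HasDerivAt (fun s : ℝ => a + s * c) c s := by
    simpa using ((hasDerivAt_id s).mul_const c).const_add a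
  have hinner := ((hL (a + s * c)).hasDerivAt.comp s hline).sub_const b
  refine (hinner.fun_pow 2).congr_deriv ?_
  simp only [Function.comp_apply]
  ring

lemma abs_two_mul_sub_mul_deriv_mul_le {L : ℝ → ℝ} {M : ℝ} (hL_le : ∀ t, |L t| ≤ M)
    (hL'_le : ∀ t, |deriv L t| ≤ M) (w b c : ℝ) :
    |2 * ((L w - b) * deriv L w * c)| ≤ 2 * M * ((M + |b|) * |c|) := by
  have hsub : |L w - b| ≤ M + |b| := (abs_sub _ _).trans (by linarith [hL_le w])
  rw [abs_mul, abs_mul, abs_mul, abs_two]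
  have hM : 0 ≤ M := (abs_nonneg _).trans (hL_le 0)
  calc 2 * (|L w - b| * |deriv L w| * |c|)
      ≤ 2 * ((M + |b|) * M * |c|) := by gcongr; exact hL'_le w
    _ = 2 * M * ((M + |b|) * |c|) := by ring

section

variable {α : Type*} [MeasurableSpace α] {μ : Measure α} [IsFiniteMeasure μ]

theorem hasDerivAt_integral_sq_comp_add_mul_sub {L : ℝ → ℝ} (hL : Differentiable ℝ L) {M : ℝ}
    (hL_le : ∀ t, |L t| ≤ M) (hL'_le : ∀ t, |deriv L t| ≤ M) {ub u v : α → ℝ}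
    (hub : MemLp ub 2 μ) (hu : AEStronglyMeasurable u μ) (hv : MemLp v 2 μ) :
    HasDerivAt (fun s => ∫ x, (L (u x + s * v x) - ub x) ^ 2 ∂μ)
      (2 * ∫ x, (L (u x) - ub x) * deriv L (u x) * v x ∂μ) 0 := by
  have hline : ∀ s : ℝ, AEStronglyMeasurable (fun x => u x + s * v x) μ :=
    fun s => hu.add (hv.1.const_mul s)
  have hLu : MemLp (fun x => L (u x) - ub x) 2 μ :=
    (MemLp.of_bound (hL.continuous.comp_aestronglyMeasurable hu) M
      (Eventually.of_forall fun x => hL_le (u x))).sub hub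
  have hbound_int : Integrable (fun x => 2 * M * ((M + |ub x|) * |v x|)) μ :=
    (((memLp_const M).add hub.abs).integrable_mul hv.abs).const_mul (2 * M)
  have hderiv_meas : AEStronglyMeasurable
      (fun x => 2 * ((L (u x) - ub x) * deriv L (u x) * v x)) μ :=
    ((hLu.1.mul ((measurable_deriv L).comp_aemeasurable hu.aemeasurable).aestronglyMeasurable).mul
      hv.1).const_mul 2
  have key := hasDerivAt_integral_of_dominated_loc_of_deriv_le (x₀ := 0)
    (F := fun s x => (L (u x + s * v x) - ub x) ^ 2)
    (F' := fun s x => 2 * ((L (u x + s * v x) - ub x) * deriv L (u x + s * v x) * v x)) univ_mem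
    (Eventually.of_forall fun s =>
      ((hL.continuous.comp_aestronglyMeasurable (hline s)).sub hub.1).pow 2)
    (by simpa using hLu.integrable_sq) (by simpa using hderiv_meas)
    (Eventually.of_forall fun x s _ => abs_two_mul_sub_mul_deriv_mul_le hL_le hL'_le _ _ _)
    hbound_int
    (Eventually.of_forall fun x s _ => hasDerivAt_sq_comp_add_mul_sub hL _ _ _ s)
  simpa [integral_const_mul] using key.2

end

theorem gateaux_differentiable_fidelity_general
    (D : Set ℝ) (hDfin : volume D ≠ ⊤)
    (ub : ℝ → ℝ) (hub : MemLp ub 2 (volume.restrict D))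
    (L : ℝ → ℝ) (hL : ContDiff ℝ 1 L)
    (M : ℝ) (hLbd : ∀ t : ℝ, |L t| ≤ M ∧ |deriv L t| ≤ M)
    (u v : ℝ → ℝ)
    (hu : MemLp u 2 (volume.restrict D)) (hv : MemLp v 2 (volume.restrict D)) :
    Tendsto
      (fun s : ℝ =>
        ((∫ x in D, (L (u x + s * v x) - ub x) ^ 2) - ∫ x in D, (L (u x) - ub x) ^ 2) / s)
      (nhdsWithin 0 {(0 : ℝ)}ᶜ)
      (nhds (2 * ∫ x in D, (L (u x) - ub x) * deriv L (u x) * v x)) := by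
  have : IsFiniteMeasure (volume.restrict D) := isFiniteMeasure_restrict.2 hDfin
  have hderiv := hasDerivAt_integral_sq_comp_add_mul_sub (hL.differentiable one_ne_zero)
    (fun t => (hLbd t).1) (fun t => (hLbd t).2) hub hu.1 hv
  refine (hasDerivAt_iff_tendsto_slope_zero.1 hderiv).congr fun s => ?_
  simp [div_eq_inv_mul]

theorem gateaux_differentiable_fidelity
    (D : Set ℝ) (hD : MeasurableSet D) (hDfin : volume D ≠ ⊤)
    (ub : ℝ → ℝ) (hub : MemLp ub 2 (volume.restrict D))
    (L : ℝ → ℝ) (hL : ContDiff ℝ 1 L)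
    (M : ℝ) (hLbd : ∀ t : ℝ, |L t| ≤ M ∧ |deriv L t| ≤ M)
    (u v : ℝ → ℝ)
    (hu : MemLp u 2 (volume.restrict D)) (hv : MemLp v 2 (volume.restrict D)) :
    Tendsto
      (fun s : ℝ =>
        ((∫ x in D, (L (u x + s * v x) - ub x) ^ 2) - ∫ x in D, (L (u x) - ub x) ^ 2) / s)
      (nhdsWithin 0 {(0 : ℝ)}ᶜ)
      (nhds (2 * ∫ x in D, (L (u x) - ub x) * deriv L (u x) * v x)) :=
  gateaux_differentiable_fidelity_general D hDfin ub hub L hL M hLbd u v hu hv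
end

section
/- Let Ω ⊆ ℝ² be open, D ⊆ Ω measurable, μ, λ > 0, and let 𝓛(r,g,b) = α r + β g + γ b with α, β, γ > 0, α + β + γ = 1. Let ū : Ω → ℝ³ and let u = (u₁,u₂,u₃) : Ω → ℝ³ be such that: (i) each component has straight isophotes, u_k(x,y) = h_k(a x + b y) with h_k ∈ C²(ℝ), (a,b) ≠ (0,0), and h_k'(a x + b y) ≠ 0 for a.e. (x,y) ∈ Ω; (ii) u(x) = ū(x) for a.e. x ∈ Ω \ D; (iii) 𝓛(u(x)) = 𝓛(ū(x)) and ū is gray on D, i.e. ū_k(x) = 𝓛(u(x)) for all k and a.e. x ∈ D. Then u is almost everywhere a stationary solution of the coupled system: for k = 1,2,3 and a.e. (x,y) ∈ Ω, |∇u_k| div( ∇u_k / |∇u_k| ) − 2μ (u_k − ū_k) 1_{Ω\D} − 2λ (𝓛(u) − ū_k) (∂𝓛/∂x_k)(u) 1_D = 0. -/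
/- Along a straight-isophote image `w(x, y) = g(a x + b y)` the gradient is `g'(a x + b y) (a, b)`,
so the unit normal `∇w / |∇w|` is `sign (g') (a, b) / ‖(a, b)‖`. Where `g'` is continuous and
nonzero this sign is locally constant, hence the curvature term `div (∇w / |∇w|)` vanishes. The
fidelity terms vanish as well: off `D` because `u = ū` there, on `D` because `ū` is the gray
value `𝓛(u)`. -/

open MeasureTheory Real

/-- First component of the gradient of `w : ℝ² → ℝ`. -/
noncomputable def grad1 (w : ℝ × ℝ → ℝ) (p : ℝ × ℝ) : ℝ := fderiv ℝ w p (1, 0)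

/-- Second component of the gradient of `w : ℝ² → ℝ`. -/
noncomputable def grad2 (w : ℝ × ℝ → ℝ) (p : ℝ × ℝ) : ℝ := fderiv ℝ w p (0, 1)

/-- Euclidean norm of the gradient, |∇w|. -/
noncomputable def gradNorm (w : ℝ × ℝ → ℝ) (p : ℝ × ℝ) : ℝ :=
  Real.sqrt ((grad1 w p) ^ 2 + (grad2 w p) ^ 2)

/-- The mean-curvature operator div(∇w/|∇w|) at `p`. -/
noncomputable def meanCurv (w : ℝ × ℝ → ℝ) (p : ℝ × ℝ) : ℝ :=
  deriv (fun s => grad1 w (s, p.2) / gradNorm w (s, p.2)) p.1 +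
    deriv (fun s => grad2 w (p.1, s) / gradNorm w (p.1, s)) p.2

open Filter Topology

lemma ContinuousAt.eventually_div_abs_eq {f : ℝ → ℝ} {x : ℝ} (hf : ContinuousAt f x)
    (hx : f x ≠ 0) : ∀ᶠ s in 𝓝 x, f s / |f s| = f x / |f x| := by
  rcases hx.lt_or_gt with hneg | hpos
  · filter_upwards [hf.eventually (gt_mem_nhds hneg)] with s hs
    rw [abs_of_neg hs, abs_of_neg hneg, div_neg, div_neg, div_self hs.ne, div_self hneg.ne]
  · filter_upwards [hf.eventually (lt_mem_nhds hpos)] with s hs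
    rw [abs_of_pos hs, abs_of_pos hpos, div_self hs.ne', div_self hpos.ne']

lemma deriv_mul_div_abs_mul_eq_zero {f : ℝ → ℝ} {x : ℝ} (hf : ContinuousAt f x)
    (hx : f x ≠ 0) (c C : ℝ) : deriv (fun s => f s * c / (|f s| * C)) x = 0 := by
  have hconst : (fun s => f s * c / (|f s| * C)) =ᶠ[𝓝 x] fun _ => f x / |f x| * (c / C) := by
    filter_upwards [hf.eventually_div_abs_eq hx] with s hs
    rw [mul_div_mul_comm, hs]
  rw [hconst.deriv_eq, deriv_const]

section StraightIsophotes

variable (a b : ℝ) {g : ℝ → ℝ} {q : ℝ × ℝ}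

lemma hasFDerivAt_comp_linear (hg : DifferentiableAt ℝ g (a * q.1 + b * q.2)) :
    HasFDerivAt (fun q : ℝ × ℝ => g (a * q.1 + b * q.2))
      (deriv g (a * q.1 + b * q.2) •
        (a • ContinuousLinearMap.fst ℝ ℝ ℝ + b • ContinuousLinearMap.snd ℝ ℝ ℝ)) q :=
  hg.hasDerivAt.comp_hasFDerivAt q
    ((hasFDerivAt_fst.const_smul a).add (hasFDerivAt_snd.const_smul b))

lemma grad1_comp_linear (hg : DifferentiableAt ℝ g (a * q.1 + b * q.2)) :
    grad1 (fun q : ℝ × ℝ => g (a * q.1 + b * q.2)) q = deriv g (a * q.1 + b * q.2) * a := by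
  simp [grad1, (hasFDerivAt_comp_linear a b hg).fderiv]

lemma grad2_comp_linear (hg : DifferentiableAt ℝ g (a * q.1 + b * q.2)) :
    grad2 (fun q : ℝ × ℝ => g (a * q.1 + b * q.2)) q = deriv g (a * q.1 + b * q.2) * b := by
  simp [grad2, (hasFDerivAt_comp_linear a b hg).fderiv]

lemma gradNorm_comp_linear (hg : DifferentiableAt ℝ g (a * q.1 + b * q.2)) :
    gradNorm (fun q : ℝ × ℝ => g (a * q.1 + b * q.2)) q
      = |deriv g (a * q.1 + b * q.2)| * √(a ^ 2 + b ^ 2) := by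
  rw [gradNorm, grad1_comp_linear a b hg, grad2_comp_linear a b hg, ← sqrt_sq_eq_abs,
    ← sqrt_mul (sq_nonneg _)]
  ring_nf

end StraightIsophotes

lemma meanCurv_comp_linear_eq_zero (a b : ℝ) {g : ℝ → ℝ} (hg : ContDiff ℝ 1 g) {p : ℝ × ℝ}
    (hp : deriv g (a * p.1 + b * p.2) ≠ 0) :
    meanCurv (fun q : ℝ × ℝ => g (a * q.1 + b * q.2)) p = 0 := by
  have hdiff : Differentiable ℝ g := hg.differentiable one_ne_zero
  have hcont : Continuous (deriv g) := hg.continuous_deriv le_rfl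
  simp only [meanCurv, grad1_comp_linear a b (hdiff _), grad2_comp_linear a b (hdiff _),
    gradNorm_comp_linear a b (hdiff _)]
  rw [deriv_mul_div_abs_mul_eq_zero (f := fun s => deriv g (a * s + b * p.2))
      (by fun_prop) hp,
    deriv_mul_div_abs_mul_eq_zero (f := fun s => deriv g (a * p.1 + b * s))
      (by fun_prop) hp, add_zero]

theorem stationary_solution_straight_isophotes_general
    (Ω : Set (ℝ × ℝ))
    (D : Set (ℝ × ℝ))
    (mu lam : ℝ)
    -- sensitivity coefficients c k = ∂𝓛/∂x_k, so that 𝓛(v) = ∑ k, c k * v k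
    (c : Fin 3 → ℝ)
    -- (i) straight isophotes with nondegenerate gradient a.e. on Ω
    (a b : ℝ)
    (h : Fin 3 → ℝ → ℝ) (hh : ∀ k, ContDiff ℝ 2 (h k))
    (u : Fin 3 → ℝ × ℝ → ℝ) (hu : ∀ k, ∀ p : ℝ × ℝ, u k p = h k (a * p.1 + b * p.2))
    (hne : ∀ k, ∀ᵐ p : ℝ × ℝ, p ∈ Ω → deriv (h k) (a * p.1 + b * p.2) ≠ 0)
    (ub : Fin 3 → ℝ × ℝ → ℝ)
    -- (ii) u coincides with the (colored) datum ū a.e. on Ω \ D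
    (hcol : ∀ᵐ p : ℝ × ℝ, p ∈ Ω \ D → ∀ k, u k p = ub k p)
    -- (iii) on D the datum ū is gray: 𝓛(u) = 𝓛(ū) and ū_k = 𝓛(u) for all k
    (hgray : ∀ᵐ p : ℝ × ℝ, p ∈ D →
      ((∑ j, c j * u j p) = (∑ j, c j * ub j p) ∧ ∀ k, ub k p = ∑ j, c j * u j p)) :
    ∀ k, ∀ᵐ p : ℝ × ℝ, p ∈ Ω →
      gradNorm (u k) p * meanCurv (u k) p
        - 2 * mu * (u k p - ub k p) * Set.indicator (Ω \ D) (fun _ => (1 : ℝ)) p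
        - 2 * lam * ((∑ j, c j * u j p) - ub k p) * c k *
            Set.indicator D (fun _ => (1 : ℝ)) p = 0 := by
  intro k
  filter_upwards [hne k, hcol, hgray] with p hpk hpcol hpgray hpΩ
  have hcurv : meanCurv (u k) p = 0 := by
    rw [show u k = _ from funext (hu k)]
    exact meanCurv_comp_linear_eq_zero a b ((hh k).of_le one_le_two) (hpk hpΩ)
  rw [hcurv, mul_zero, zero_sub]
  by_cases hpD : p ∈ D
  · rw [Set.indicator_of_notMem (fun hm => hm.2 hpD), Set.indicator_of_mem hpD,
      (hpgray hpD).2 k]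
    ring
  · rw [Set.indicator_of_notMem hpD, hpcol ⟨hpΩ, hpD⟩ k]
    ring

theorem stationary_solution_straight_isophotes
    (Ω : Set (ℝ × ℝ)) (hΩ : IsOpen Ω)
    (D : Set (ℝ × ℝ)) (hD : MeasurableSet D) (hDΩ : D ⊆ Ω)
    (mu lam : ℝ) (hmu : 0 < mu) (hlam : 0 < lam)
    (α β γ : ℝ) (hα : 0 < α) (hβ : 0 < β) (hγ : 0 < γ) (hsum : α + β + γ = 1)
    -- sensitivity coefficients c k = ∂𝓛/∂x_k, so that 𝓛(v) = ∑ k, c k * v k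
    (c : Fin 3 → ℝ) (hc0 : c 0 = α) (hc1 : c 1 = β) (hc2 : c 2 = γ)
    -- (i) straight isophotes with nondegenerate gradient a.e. on Ω
    (a b : ℝ) (hab : (a, b) ≠ ((0 : ℝ), (0 : ℝ)))
    (h : Fin 3 → ℝ → ℝ) (hh : ∀ k, ContDiff ℝ 2 (h k))
    (u : Fin 3 → ℝ × ℝ → ℝ) (hu : ∀ k, ∀ p : ℝ × ℝ, u k p = h k (a * p.1 + b * p.2))
    (hne : ∀ k, ∀ᵐ p : ℝ × ℝ, p ∈ Ω → deriv (h k) (a * p.1 + b * p.2) ≠ 0)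
    (ub : Fin 3 → ℝ × ℝ → ℝ)
    -- (ii) u coincides with the (colored) datum ū a.e. on Ω \ D
    (hcol : ∀ᵐ p : ℝ × ℝ, p ∈ Ω \ D → ∀ k, u k p = ub k p)
    -- (iii) on D the datum ū is gray: 𝓛(u) = 𝓛(ū) and ū_k = 𝓛(u) for all k
    (hgray : ∀ᵐ p : ℝ × ℝ, p ∈ D →
      ((∑ j, c j * u j p) = (∑ j, c j * ub j p) ∧ ∀ k, ub k p = ∑ j, c j * u j p)) :
    ∀ k, ∀ᵐ p : ℝ × ℝ, p ∈ Ω →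
      gradNorm (u k) p * meanCurv (u k) p
        - 2 * mu * (u k p - ub k p) * Set.indicator (Ω \ D) (fun _ => (1 : ℝ)) p
        - 2 * lam * ((∑ j, c j * u j p) - ub k p) * c k *
            Set.indicator D (fun _ => (1 : ℝ)) p = 0 :=
  stationary_solution_straight_isophotes_general Ω D mu lam c a b h hh u hu hne ub hcol hgray
end
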